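/- arXiv:1906.02423 — 6 statements merged into one kernel-verified Lean document; each statement's English description precedes it below -/
import Mathlib

section
/- (Scum theorem) If N is a minor of a matroid M = (E, ρ), then there exist sets A ⊆ B ⊆ E with ρ(A) = ρ(E) − ρ_N(E_N) and ρ(B) = ρ(E) such that M|B/A is isomorphic to N. Moreover, if N has no loops (every singleton has positive rank), then A can be chosen to be a flat of M. -/
/-- A matroid given by an integer-valued rank function on a finite ground set. -/
structure RankMatroid (α : Type*) [DecidableEq α] where
  E : Finset α
  rk : Finset α → ℤ
  rk_nonneg : ∀ X, X ⊆ E → 0 ≤ rk X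
  rk_le_card : ∀ X, X ⊆ E → rk X ≤ X.card
  rk_mono : ∀ X Y, X ⊆ Y → Y ⊆ E → rk X ≤ rk Y
  rk_submod : ∀ X Y, X ⊆ E → Y ⊆ E → rk (X ∪ Y) + rk (X ∩ Y) ≤ rk X + rk Y

/-- The closure of `X` in the matroid on ground set `E` with rank function `rk`. -/
def clOf {α : Type*} [DecidableEq α] (E : Finset α) (rk : Finset α → ℤ)
    (X : Finset α) : Finset α :=
  E.filter fun e => rk (insert e X) = rk X

/-- `F` is a flat of the matroid on `E` with rank function `rk` if `cl(F) = F`. -/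
def IsFlatOf {α : Type*} [DecidableEq α] (E : Finset α) (rk : Finset α → ℤ)
    (F : Finset α) : Prop :=
  F ⊆ E ∧ clOf E rk F = F

/-- The rank function of the minor `M|B/A`: `X ↦ ρ(X ∪ A) − ρ(A)`. -/
def minorRk {α : Type*} [DecidableEq α] (M : RankMatroid α) (A : Finset α) :
    Finset α → ℤ :=
  fun X => M.rk (X ∪ A) - M.rk A

/-- The matroid on `E₁` with rank function `rk₁` is isomorphic to the matroid on `E₂`
with rank function `rk₂`: there is a rank-preserving bijection of ground sets. -/
def IsoRkTo {α β : Type*} [DecidableEq α] [DecidableEq β]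
    (E₁ : Finset α) (rk₁ : Finset α → ℤ) (E₂ : Finset β) (rk₂ : Finset β → ℤ) : Prop :=
  ∃ φ : α → β, Set.InjOn φ E₁ ∧ E₁.image φ = E₂ ∧ ∀ X ⊆ E₁, rk₂ (X.image φ) = rk₁ X

namespace RankMatroid
variable {α : Type*} [DecidableEq α] (M : RankMatroid α)

lemma rk_insert_le {X : Finset α} {e : α} (hX : X ⊆ M.E) (he : e ∈ M.E) :
    M.rk (insert e X) ≤ M.rk X + 1 := by
  have h := M.rk_submod {e} X (by simpa using he) hX
  have h1 : M.rk {e} ≤ 1 := by simpa using M.rk_le_card {e} (by simpa using he)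
  have h2 : (0:ℤ) ≤ M.rk ({e} ∩ X) := M.rk_nonneg _ (le_trans (Finset.inter_subset_right) hX)
  have : ({e} : Finset α) ∪ X = insert e X := by ext x; simp [or_comm]
  rw [this] at h; linarith

lemma diff_mono {S S' : Finset α} (Y : Finset α) (hSS' : S ⊆ S') (hS'E : S' ⊆ M.E)
    (hY : Y ⊆ M.E) : M.rk (Y ∪ S') - M.rk S' ≤ M.rk (Y ∪ S) - M.rk S := by
  have h := M.rk_submod (Y ∪ S) S' (Finset.union_subset hY (hSS'.trans hS'E)) hS'E
  have h1 : (Y ∪ S) ∪ S' = Y ∪ S' := by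
    rw [Finset.union_assoc, Finset.union_eq_right.mpr hSS']
  have h2 : M.rk S ≤ M.rk ((Y ∪ S) ∩ S') := by
    apply M.rk_mono _ _ (Finset.subset_inter (Finset.subset_union_right) hSS')
    exact le_trans Finset.inter_subset_right hS'E
  rw [h1] at h; linarith

lemma spanning {S : Finset α} (hS : S ⊆ M.E)
    (h : ∀ e ∈ M.E, M.rk (insert e S) = M.rk S) : M.rk M.E = M.rk S := by
  have key : ∀ T : Finset α, T ⊆ M.E → M.rk (S ∪ T) = M.rk S := by
    intro T
    induction T using Finset.induction_on with
    | empty => simp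
    | @insert e T' he ih =>
      intro hT
      have hT' : T' ⊆ M.E := (Finset.subset_insert _ _).trans hT
      have heE : e ∈ M.E := hT (Finset.mem_insert_self _ _)
      have h1 : S ∪ insert e T' = (S ∪ T') ∪ insert e S := by
        ext x; simp; tauto
      have hsub := M.rk_submod (S ∪ T') (insert e S)
        (Finset.union_subset hS hT') (Finset.insert_subset heE hS)
      have h2 : M.rk S ≤ M.rk ((S ∪ T') ∩ insert e S) := by
        apply M.rk_mono _ _ (Finset.subset_inter Finset.subset_union_left
          (Finset.subset_insert _ _))
        exact le_trans Finset.inter_subset_right (Finset.insert_subset heE hS)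
      have h3 : M.rk S ≤ M.rk (S ∪ insert e T') :=
        M.rk_mono _ _ Finset.subset_union_left (Finset.union_subset hS hT)
      rw [h1]
      have := h e heE
      have := ih hT'
      rw [h1] at h3
      linarith
  have := key M.E le_rfl
  rwa [Finset.union_eq_right.mpr hS] at this

end RankMatroid

namespace RankMatroid
variable {α : Type*} [DecidableEq α] (M : RankMatroid α)

lemma rk_insert_union {A' C : Finset α} {e : α} (hA'E : A' ⊆ M.E) (hCE : C ⊆ M.E)
    (heE : e ∈ M.E) :
    M.rk (insert e (C ∪ A')) + M.rk A' ≤ M.rk (insert e A') + M.rk (C ∪ A') := by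
  have h := M.rk_submod (insert e A') (C ∪ A') (Finset.insert_subset heE hA'E)
    (Finset.union_subset hCE hA'E)
  have h1 : (insert e A') ∪ (C ∪ A') = insert e (C ∪ A') := by ext x; simp; tauto
  have h2 : M.rk A' ≤ M.rk ((insert e A') ∩ (C ∪ A')) := by
    apply M.rk_mono _ _ (Finset.subset_inter (Finset.subset_insert _ _)
      Finset.subset_union_right)
    exact le_trans Finset.inter_subset_left (Finset.insert_subset heE hA'E)
  rw [h1] at h; linarith

lemma transfer {A A' C X : Finset α} (hAA' : A ⊆ A') (hA'E : A' ⊆ M.E) (hCE : C ⊆ M.E)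
    (hXC : X ⊆ C) (heq : M.rk (C ∪ A') - M.rk A' = M.rk (C ∪ A) - M.rk A) :
    M.rk (X ∪ A') - M.rk A' = M.rk (X ∪ A) - M.rk A := by
  have le1 := M.diff_mono X hAA' hA'E (hXC.trans hCE)
  have hXA' : X ∪ A' ⊆ M.E := Finset.union_subset (hXC.trans hCE) hA'E
  have le2 := M.diff_mono C (Finset.union_subset_union_right hAA' : X ∪ A ⊆ X ∪ A')
    hXA' hCE
  have h1 : C ∪ (X ∪ A') = C ∪ A' := by
    rw [← Finset.union_assoc, Finset.union_eq_left.mpr hXC]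
  have h2 : C ∪ (X ∪ A) = C ∪ A := by
    rw [← Finset.union_assoc, Finset.union_eq_left.mpr hXC]
  rw [h1, h2] at le2
  linarith

end RankMatroid


/-- **Scum theorem.** If `N` is a minor of `M = (E, ρ)`, then there are sets
`A ⊆ B ⊆ E` with `ρ(A) = ρ(E) − ρ_N(E_N)` and `ρ(B) = ρ(E)` such that `M|B/A ≅ N`;
moreover, if every singleton of `N` has positive rank, `A` can be chosen to be a
flat of `M`. -/
theorem scum_theorem {α β : Type*} [DecidableEq α] [DecidableEq β]
    (M : RankMatroid α) (N : RankMatroid β)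
    (hminor : ∃ A B : Finset α, A ⊆ B ∧ B ⊆ M.E ∧
      IsoRkTo N.E N.rk (B \ A) (minorRk M A)) :
    ∃ A B : Finset α, A ⊆ B ∧ B ⊆ M.E ∧
      M.rk A = M.rk M.E - N.rk N.E ∧ M.rk B = M.rk M.E ∧
      IsoRkTo N.E N.rk (B \ A) (minorRk M A) ∧
      ((∀ e ∈ N.E, 0 < N.rk {e}) → IsFlatOf M.E M.rk A) := by
  classical
  obtain ⟨A, B, hAB, hBE, φ, hinj, himg, hrk⟩ := hminor
  set C := B \ A with hCdef
  have hCE : C ⊆ M.E := (Finset.sdiff_subset).trans hBE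
  have hAE : A ⊆ M.E := hAB.trans hBE
  set P : Finset α → Prop := fun A' => A ⊆ A' ∧ A' ∩ C = ∅ ∧
    M.rk (C ∪ A') - M.rk A' = M.rk (C ∪ A) - M.rk A with hPdef
  set 𝒜 : Finset (Finset α) := M.E.powerset.filter P with h𝒜def
  have hA𝒜 : A ∈ 𝒜 := by
    rw [h𝒜def, Finset.mem_filter, Finset.mem_powerset]
    refine ⟨hAE, le_rfl, ?_, rfl⟩
    ext x; simp [hCdef]
  obtain ⟨A', hA'𝒜, hmax⟩ := Finset.exists_max_image 𝒜 Finset.card ⟨A, hA𝒜⟩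
  rw [h𝒜def, Finset.mem_filter, Finset.mem_powerset] at hA'𝒜
  have hA'E : A' ⊆ M.E := hA'𝒜.1
  have hAA' : A ⊆ A' := hA'𝒜.2.1
  have hdisj : A' ∩ C = ∅ := hA'𝒜.2.2.1
  have heq : M.rk (C ∪ A') - M.rk A' = M.rk (C ∪ A) - M.rk A := hA'𝒜.2.2.2
  -- maximality consequence
  have hmax' : ∀ e ∈ M.E, e ∉ A' → e ∉ C →
      ¬ (M.rk (C ∪ insert e A') - M.rk (insert e A') = M.rk (C ∪ A) - M.rk A) := by
    intro e heE heA' heC hcontra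
    have hmem : insert e A' ∈ 𝒜 := by
      rw [h𝒜def, Finset.mem_filter, Finset.mem_powerset]
      refine ⟨Finset.insert_subset heE hA'E, hAA'.trans (Finset.subset_insert _ _), ?_, hcontra⟩
      ext x
      simp only [Finset.mem_inter, Finset.mem_insert, Finset.notMem_empty, iff_false]
      rintro ⟨rfl | hxA', hxC⟩
      · exact heC hxC
      · exact (Finset.eq_empty_iff_forall_notMem.mp hdisj x) (Finset.mem_inter.mpr ⟨hxA', hxC⟩)
    have := hmax _ hmem
    rw [Finset.card_insert_of_notMem heA'] at this
    omega
  -- C ∪ A' is spanning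
  have hCA'E : C ∪ A' ⊆ M.E := Finset.union_subset hCE hA'E
  have hspan : ∀ e ∈ M.E, M.rk (insert e (C ∪ A')) = M.rk (C ∪ A') := by
    intro e heE
    by_cases heCA : e ∈ C ∪ A'
    · rw [Finset.insert_eq_self.mpr heCA]
    · simp only [Finset.mem_union, not_or] at heCA
      obtain ⟨heC, heA'⟩ := heCA
      by_contra hne
      have hlb : M.rk (C ∪ A') ≤ M.rk (insert e (C ∪ A')) :=
        M.rk_mono _ _ (Finset.subset_insert _ _) (Finset.insert_subset heE hCA'E)
      have hub := M.rk_insert_le hCA'E heE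
      have heq1 : M.rk (insert e (C ∪ A')) = M.rk (C ∪ A') + 1 := by omega
      have hsub := M.rk_insert_union hA'E hCE heE
      have hub2 := M.rk_insert_le hA'E heE
      have hins : M.rk (insert e A') = M.rk A' + 1 := by omega
      apply hmax' e heE heA' heC
      have hun : C ∪ insert e A' = insert e (C ∪ A') := by ext x; simp; try tauto
      rw [hun, heq1, hins]
      linarith
  have hrkfull : M.rk M.E = M.rk (C ∪ A') := M.spanning hCA'E hspan
  -- value of the rank difference
  have hNE : M.rk (C ∪ A) - M.rk A = N.rk N.E := by
    have h := hrk N.E le_rfl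
    rw [himg] at h
    simpa [minorRk] using h
  have hsd : (A' ∪ C) \ A' = C := by
    ext x
    simp only [Finset.mem_sdiff, Finset.mem_union]
    constructor
    · rintro ⟨hx | hx, hxA'⟩
      · exact absurd hx hxA'
      · exact hx
    · intro hx
      exact ⟨Or.inr hx, fun hxA' =>
        (Finset.eq_empty_iff_forall_notMem.mp hdisj x) (Finset.mem_inter.mpr ⟨hxA', hx⟩)⟩
  refine ⟨A', A' ∪ C, Finset.subset_union_left, Finset.union_subset hA'E hCE, ?_, ?_, ?_, ?_⟩
  · linarith
  · rw [Finset.union_comm]; linarith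
  · refine ⟨φ, hinj, by rw [hsd, himg], ?_⟩
    intro X hX
    have hXC : X.image φ ⊆ C := by rw [← himg]; exact Finset.image_subset_image hX
    have ht := M.transfer hAA' hA'E hCE hXC heq
    have h := hrk X hX
    simp only [minorRk] at h ⊢
    rw [ht, h]
  · intro hl
    refine ⟨hA'E, ?_⟩
    ext x
    simp only [clOf, Finset.mem_filter]
    constructor
    · rintro ⟨hxE, hxrk⟩
      by_contra hxA'
      by_cases hxC : x ∈ C
      · -- x is the image of a point of N, which has positive rank
        have hxim : x ∈ N.E.image φ := by rw [himg]; exact hxC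
        obtain ⟨y, hyNE, hyx⟩ := Finset.mem_image.mp hxim
        have hy := hrk {y} (by simpa using hyNE)
        have himy : ({y} : Finset β).image φ = {x} := by rw [Finset.image_singleton, hyx]
        rw [himy] at hy
        have hpos := hl y hyNE
        have ht := M.transfer hAA' hA'E hCE (by simpa using hxC :
          ({x} : Finset α) ⊆ C) heq
        have hxu : ({x} : Finset α) ∪ A' = insert x A' := by ext z; simp
        simp only [minorRk] at hy
        rw [hxu, hxrk] at ht
        omega
      · apply hmax' x hxE hxA' hxC
        have hun : C ∪ insert x A' = insert x (C ∪ A') := by ext z; simp; try tauto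
        have hsub := M.rk_insert_union hA'E hCE hxE
        have hlb : M.rk (C ∪ A') ≤ M.rk (insert x (C ∪ A')) :=
          M.rk_mono _ _ (Finset.subset_insert _ _) (Finset.insert_subset hxE hCA'E)
        rw [hun, hxrk]
        rw [hxrk] at hsub
        have : M.rk (insert x (C ∪ A')) = M.rk (C ∪ A') := by omega
        rw [this]; linarith
    · intro hxA'
      exact ⟨hA'E hxA', by rw [Finset.insert_eq_self.mpr hxA']⟩
end

section
/- Let M = (E, ρ) be an (n,k,r)-MR matroid with repair sets R_1, …, R_g partitioning E, each of size r+1. Then the flats of M are exactly the sets F ⊆ E such that either F = E, or: for every i ∈ [g] one has R_i ⊆ F or |R_i ∩ F| ≤ r − 1, and |F| − |{i : R_i ⊆ F}| < k. Moreover, the rank of any flat F ≠ E equals |F| − |{i : R_i ⊆ F}|. -/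
/-- The matroid of an `(n,k,r)` maximally recoverable LRC: the ground set `E` is
partitioned into `g` repair sets of size `r+1`, and the rank function is
`ρ(A) = min(k, |A| − #{i : Rᵢ ⊆ A})` (with `k ≤ g·r`). -/
structure MRMatroid (α : Type*) [DecidableEq α] where
  k : ℕ
  r : ℕ
  g : ℕ
  E : Finset α
  R : Fin g → Finset α
  hdisj : ∀ i j, i ≠ j → Disjoint (R i) (R j)
  hcover : E = Finset.univ.biUnion R
  hcardR : ∀ i, (R i).card = r + 1
  hk : 0 < k
  hr : 0 < r
  hkgr : k ≤ g * r

/-- The rank function of an MR matroid: `ρ(A) = min(k, |A| − #{i : Rᵢ ⊆ A})`. -/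
def MRMatroid.rk {α : Type*} [DecidableEq α] (M : MRMatroid α) (A : Finset α) : ℤ :=
  min (M.k : ℤ)
    ((A.card : ℤ) - ((Finset.univ.filter fun i => M.R i ⊆ A).card : ℤ))

/-- `M` has a minor (obtained by restricting to `B` and contracting `A`) which is
isomorphic to the uniform matroid of rank `k'` on `m` elements. -/
def MRMatroid.HasUniformMinor {α : Type*} [DecidableEq α] (M : MRMatroid α)
    (m k' : ℤ) : Prop :=
  ∃ A B : Finset α, A ⊆ B ∧ B ⊆ M.E ∧ ((B \ A).card : ℤ) = m ∧
    ∀ X ⊆ B \ A, M.rk (X ∪ A) - M.rk A = min k' (X.card : ℤ)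

namespace MRAux

open Finset

variable {α : Type*} [DecidableEq α] (M : MRMatroid α)

/-- `#{i : Rᵢ ⊆ A}` as an integer. -/
def fc (A : Finset α) : ℤ := ((Finset.univ.filter fun i => M.R i ⊆ A).card : ℤ)

/-- `|A| − #{i : Rᵢ ⊆ A}` as an integer. -/
def phi (A : Finset α) : ℤ := (A.card : ℤ) - fc M A

lemma rk_eq (A : Finset α) : M.rk A = min (M.k : ℤ) (phi M A) := rfl

lemma R_subset_E (i : Fin M.g) : M.R i ⊆ M.E := by
  rw [M.hcover]; exact Finset.subset_biUnion_of_mem _ (Finset.mem_univ i)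

lemma mem_of_subset_insert {A : Finset α} {e : α} {i : Fin M.g}
    (h1 : M.R i ⊆ insert e A) (h2 : ¬ M.R i ⊆ A) : e ∈ M.R i := by
  obtain ⟨x, hx, hxA⟩ := Finset.not_subset.mp h2
  rcases Finset.mem_insert.mp (h1 hx) with h | h
  · exact h ▸ hx
  · exact absurd h hxA

lemma fc_mono {A B : Finset α} (h : A ⊆ B) : fc M A ≤ fc M B := by
  unfold fc
  have hsub : (Finset.univ.filter fun i => M.R i ⊆ A) ⊆
      (Finset.univ.filter fun i => M.R i ⊆ B) := by
    intro i hi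
    simp only [Finset.mem_filter, Finset.mem_univ, true_and] at *
    exact hi.trans h
  exact_mod_cast Finset.card_le_card hsub

lemma fc_insert_le (A : Finset α) (e : α) : fc M (insert e A) ≤ fc M A + 1 := by
  classical
  set S := Finset.univ.filter fun i => M.R i ⊆ A with hS
  set S' := Finset.univ.filter fun i => M.R i ⊆ insert e A with hS'
  have hSS' : S ⊆ S' := by
    intro i hi
    simp only [hS, hS', Finset.mem_filter, Finset.mem_univ, true_and] at *
    exact hi.trans (Finset.subset_insert _ _)
  have hone : (S' \ S).card ≤ 1 := by
    apply Finset.card_le_one.mpr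
    intro i hi j hj
    simp only [hS', hS, Finset.mem_sdiff, Finset.mem_filter, Finset.mem_univ, true_and] at hi hj
    have hei : e ∈ M.R i := mem_of_subset_insert M hi.1 hi.2
    have hej : e ∈ M.R j := mem_of_subset_insert M hj.1 hj.2
    by_contra hij
    exact (Finset.disjoint_left.mp (M.hdisj i j hij) hei) hej
  have := Finset.card_sdiff_add_card_eq_card hSS'
  unfold fc
  rw [← hS, ← hS']
  omega

lemma phi_le_phi_insert (A : Finset α) (e : α) : phi M A ≤ phi M (insert e A) := by
  by_cases he : e ∈ A
  · rw [Finset.insert_eq_self.mpr he]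
  · have h1 : (insert e A).card = A.card + 1 := Finset.card_insert_of_notMem he
    have h2 := fc_insert_le M A e
    unfold phi
    rw [h1]
    push_cast
    omega

lemma phi_insert_le (A : Finset α) (e : α) : phi M (insert e A) ≤ phi M A + 1 := by
  have h1 : (insert e A).card ≤ A.card + 1 := Finset.card_insert_le _ _
  have h2 : fc M A ≤ fc M (insert e A) := fc_mono M (Finset.subset_insert _ _)
  unfold phi
  have : ((insert e A).card : ℤ) ≤ (A.card : ℤ) + 1 := by exact_mod_cast h1
  omega

end MRAux

/-- The flats of an `(n,k,r)`-MR matroid are exactly the sets `F ⊆ E` with either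
`F = E`, or: for all `i`, `Rᵢ ⊆ F` or `|Rᵢ ∩ F| ≤ r − 1`, and
`|F| − #{i : Rᵢ ⊆ F} < k`. Moreover the rank of a flat `F ≠ E` is
`|F| − #{i : Rᵢ ⊆ F}`. -/



theorem mr_matroid_flats {α : Type*} [DecidableEq α] (M : MRMatroid α)
    (F : Finset α) (hF : F ⊆ M.E) :
    (IsFlatOf M.E M.rk F ↔
      (F = M.E ∨
        ((∀ i, M.R i ⊆ F ∨ (((M.R i ∩ F).card : ℤ) ≤ (M.r : ℤ) - 1)) ∧
          (F.card : ℤ) - ((Finset.univ.filter fun i => M.R i ⊆ F).card : ℤ) < M.k))) ∧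
    (IsFlatOf M.E M.rk F → F ≠ M.E →
      M.rk F =
        (F.card : ℤ) - ((Finset.univ.filter fun i => M.R i ⊆ F).card : ℤ)) := by

  classical
  open MRAux in
  have hrk : ∀ A : Finset α, M.rk A = min (M.k : ℤ) (MRAux.phi M A) := fun _ => rfl
  have hphiF : MRAux.phi M F =
      (F.card : ℤ) - ((Finset.univ.filter fun i => M.R i ⊆ F).card : ℤ) := rfl
  by_cases hFE : F = M.E
  · -- F = E : it is a flat, RHS holds via the left disjunct, rank claim vacuous.
    subst hFE
    have hflat : IsFlatOf M.E M.rk M.E := by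
      refine ⟨Finset.Subset.refl _, ?_⟩
      unfold clOf
      apply Finset.filter_true_of_mem
      intro e he
      rw [Finset.insert_eq_self.mpr he]
    exact ⟨⟨fun _ => Or.inl rfl, fun _ => hflat⟩, fun _ h => absurd rfl h⟩
  · by_cases hlt : MRAux.phi M F < (M.k : ℤ)
    · -- low-rank case
      have hrkF : M.rk F = MRAux.phi M F := by
        rw [hrk]; exact min_eq_right hlt.le
      constructor
      · constructor
        · -- flat → condition
          rintro ⟨-, hcl⟩
          refine Or.inr ⟨?_, by rw [← hphiF]; exact hlt⟩
          intro i
          by_contra hcon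
          push_neg at hcon
          obtain ⟨hnsub, hcard⟩ := hcon
          have hcardge : (M.r : ℤ) ≤ ((M.R i ∩ F).card : ℤ) := by omega
          have hcardge' : M.r ≤ (M.R i ∩ F).card := by exact_mod_cast hcardge
          have hsd : (M.R i \ F).card + (M.R i ∩ F).card = (M.R i).card :=
            Finset.card_sdiff_add_card_inter _ _
          have hne : (M.R i \ F).Nonempty := by
            obtain ⟨x, hx, hxF⟩ := Finset.not_subset.mp hnsub
            exact ⟨x, Finset.mem_sdiff.mpr ⟨hx, hxF⟩⟩
          have hone : (M.R i \ F).card = 1 := by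
            have h1 : 1 ≤ (M.R i \ F).card := Finset.card_pos.mpr hne
            have h2 := M.hcardR i
            omega
          obtain ⟨e, he⟩ := Finset.card_eq_one.mp hone
          have heR : e ∈ M.R i := by
            have : e ∈ M.R i \ F := he ▸ Finset.mem_singleton_self e
            exact (Finset.mem_sdiff.mp this).1
          have heF : e ∉ F := by
            have : e ∈ M.R i \ F := he ▸ Finset.mem_singleton_self e
            exact (Finset.mem_sdiff.mp this).2
          have hRins : M.R i ⊆ insert e F := by
            intro x hx
            by_cases hxF : x ∈ F
            · exact Finset.mem_insert_of_mem hxF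
            · have : x ∈ M.R i \ F := Finset.mem_sdiff.mpr ⟨hx, hxF⟩
              rw [he] at this
              exact Finset.mem_insert.mpr (Or.inl (Finset.mem_singleton.mp this))
          -- fc strictly increases
          have hfc : MRAux.fc M F + 1 ≤ MRAux.fc M (insert e F) := by
            have hss : (Finset.univ.filter fun j => M.R j ⊆ F) ⊂
                (Finset.univ.filter fun j => M.R j ⊆ insert e F) := by
              refine ⟨?_, ?_⟩
              · intro j hj
                simp only [Finset.mem_filter, Finset.mem_univ, true_and] at *
                exact hj.trans (Finset.subset_insert _ _)
              intro hsub
              have : i ∈ Finset.univ.filter fun j => M.R j ⊆ F :=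
                hsub (Finset.mem_filter.mpr ⟨Finset.mem_univ _, hRins⟩)
              exact hnsub (Finset.mem_filter.mp this).2
            have := Finset.card_lt_card hss
            unfold MRAux.fc
            omega
          have hphieq : MRAux.phi M (insert e F) = MRAux.phi M F := by
            have h1 := MRAux.phi_le_phi_insert M F e
            have h2 : MRAux.phi M (insert e F) ≤ MRAux.phi M F := by
              have hc : ((insert e F).card : ℤ) = (F.card : ℤ) + 1 := by
                exact_mod_cast Finset.card_insert_of_notMem heF
              unfold MRAux.phi at *
              omega
            omega
          have heCl : e ∈ clOf M.E M.rk F := by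
            unfold clOf
            refine Finset.mem_filter.mpr ⟨MRAux.R_subset_E M i heR, ?_⟩
            rw [hrk, hrk, hphieq]
          rw [hcl] at heCl
          exact heF heCl
        · -- condition → flat
          rintro (h | ⟨hcond, hklt⟩)
          · exact absurd h hFE
          refine ⟨hF, ?_⟩
          apply Finset.Subset.antisymm
          · intro e heCl
            unfold clOf at heCl
            obtain ⟨heE, heq⟩ := Finset.mem_filter.mp heCl
            by_contra heF
            -- fc unchanged, so phi increases by 1
            have hfceq : MRAux.fc M (insert e F) = MRAux.fc M F := by
              have hsub : (Finset.univ.filter fun j => M.R j ⊆ insert e F) ⊆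
                  (Finset.univ.filter fun j => M.R j ⊆ F) := by
                intro j hj
                have hj' := (Finset.mem_filter.mp hj).2
                refine Finset.mem_filter.mpr ⟨Finset.mem_univ _, ?_⟩
                by_contra hns
                have hej : e ∈ M.R j := MRAux.mem_of_subset_insert M hj' hns
                rcases hcond j with h | h
                · exact hns h
                · -- |R j ∩ F| ≥ r, contradiction
                  have hsub2 : M.R j \ {e} ⊆ M.R j ∩ F := by
                    intro x hx
                    obtain ⟨hx1, hx2⟩ := Finset.mem_sdiff.mp hx
                    have hx3 := hj' hx1
                    rcases Finset.mem_insert.mp hx3 with h' | h'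
                    · exact absurd (Finset.mem_singleton.mpr h') hx2
                    · exact Finset.mem_inter.mpr ⟨hx1, h'⟩
                  have hc1 : (M.R j \ {e}).card = M.r := by
                    rw [Finset.sdiff_singleton_eq_erase,
                      Finset.card_erase_of_mem hej, M.hcardR j]
                    omega
                  have hc2 := Finset.card_le_card hsub2
                  rw [hc1] at hc2
                  have : ((M.R j ∩ F).card : ℤ) ≥ (M.r : ℤ) := by exact_mod_cast hc2
                  omega
              have h1 := MRAux.fc_mono M (Finset.subset_insert e F)
              have h2 : MRAux.fc M (insert e F) ≤ MRAux.fc M F := by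
                unfold MRAux.fc
                exact_mod_cast Finset.card_le_card hsub
              omega
            have hphi1 : MRAux.phi M (insert e F) = MRAux.phi M F + 1 := by
              have hc : ((insert e F).card : ℤ) = (F.card : ℤ) + 1 := by
                exact_mod_cast Finset.card_insert_of_notMem heF
              unfold MRAux.phi
              rw [hc, hfceq]
              ring
            rw [hrk, hrk, hphi1, min_eq_right hlt.le,
              min_eq_right (by omega : MRAux.phi M F + 1 ≤ (M.k : ℤ))] at heq
            omega
          · intro e heF
            unfold clOf
            exact Finset.mem_filter.mpr ⟨hF heF, by rw [Finset.insert_eq_self.mpr heF]⟩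
      · intro _ _
        rw [hrkF, hphiF]
    · -- high-rank case: F ≠ E, phi F ≥ k : not a flat
      push_neg at hlt
      have hnotflat : ¬ IsFlatOf M.E M.rk F := by
        rintro ⟨-, hcl⟩
        apply hFE
        apply Finset.Subset.antisymm hF
        intro e heE
        have : e ∈ clOf M.E M.rk F := by
          unfold clOf
          refine Finset.mem_filter.mpr ⟨heE, ?_⟩
          rw [hrk, hrk, min_eq_left hlt,
            min_eq_left (hlt.trans (MRAux.phi_le_phi_insert M F e))]
        rwa [hcl] at this
      constructor
      · constructor
        · intro h; exact absurd h hnotflat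
        · rintro (h | ⟨-, hklt⟩)
          · exact absurd h hFE
          · rw [← hphiF] at hklt
            omega
      · intro h; exact absurd h hnotflat
end

section
/- If M is an (n,k,r)-MR matroid with g = n/(r+1) repair sets, then M has a minor isomorphic to the uniform matroid U_{n−g}^k; concretely, deleting one element from each repair set yields U_{n−g}^k. -/
lemma mr_aux {α : Type*} [DecidableEq α] (M : MRMatroid α)
    (e : Fin M.g → α) (he : ∀ i, e i ∈ M.R i) :
    ((M.E \ Finset.univ.image e).card : ℤ) = (M.E.card : ℤ) - (M.g : ℤ) ∧
    ∀ A ⊆ M.E \ Finset.univ.image e, M.rk A = min (M.k : ℤ) (A.card : ℤ) := by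
  have hinj : Function.Injective e := by
    intro i j hij
    by_contra hne
    exact Finset.disjoint_left.mp (M.hdisj i j hne) (he i) (hij ▸ he j)
  have hsub : Finset.univ.image e ⊆ M.E := by
    intro x hx
    obtain ⟨i, -, rfl⟩ := Finset.mem_image.mp hx
    rw [M.hcover]
    exact Finset.mem_biUnion.mpr ⟨i, Finset.mem_univ i, he i⟩
  have hcard : (Finset.univ.image e).card = M.g := by
    rw [Finset.card_image_of_injective _ hinj, Finset.card_univ, Fintype.card_fin]
  constructor
  · rw [Finset.card_sdiff_of_subset hsub, hcard,
      Nat.cast_sub (hcard ▸ Finset.card_le_card hsub)]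
  · intro A hA
    have hfilt : (Finset.univ.filter fun i => M.R i ⊆ A) = ∅ := by
      rw [Finset.filter_eq_empty_iff]
      intro i _ hRA
      have := hA (hRA (he i))
      exact (Finset.mem_sdiff.mp this).2
        (Finset.mem_image.mpr ⟨i, Finset.mem_univ i, rfl⟩)
    simp [MRMatroid.rk, hfilt]

/-- An `(n,k,r)`-MR matroid has a minor isomorphic to the uniform matroid
`U_{n−g}^k`; concretely, deleting one element from each repair set yields
`U_{n−g}^k` (the restriction to the remaining `n − g` elements has uniform rank
function `min(k, |A|)`). -/
theorem mr_matroid_delete_one_per_repair_set {α : Type*} [DecidableEq α]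
    (M : MRMatroid α) :
    M.HasUniformMinor ((M.E.card : ℤ) - (M.g : ℤ)) (M.k : ℤ) ∧
    ∀ e : Fin M.g → α, (∀ i, e i ∈ M.R i) →
      ((M.E \ Finset.univ.image e).card : ℤ) = (M.E.card : ℤ) - (M.g : ℤ) ∧
      ∀ A ⊆ M.E \ Finset.univ.image e, M.rk A = min (M.k : ℤ) (A.card : ℤ) := by
  have hRne : ∀ i, ∃ x, x ∈ M.R i := by
    intro i
    have := M.hcardR i
    exact Finset.card_pos.mp (by omega)
  choose e he using hRne
  obtain ⟨hcard, hrk⟩ := mr_aux M e he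
  refine ⟨⟨∅, M.E \ Finset.univ.image e, Finset.empty_subset _,
    Finset.sdiff_subset, by simpa using hcard, ?_⟩, fun e' he' => mr_aux M e' he'⟩
  intro X hX
  rw [Finset.sdiff_empty] at hX
  have hrkX := hrk X hX
  have hrk0 : M.rk ∅ = 0 := by
    have hf : (Finset.univ.filter fun i => M.R i ⊆ (∅ : Finset α)) = ∅ :=
      Finset.filter_eq_empty_iff.mpr fun i _ h =>
        absurd (h (he i)) (Finset.notMem_empty _)
    unfold MRMatroid.rk
    rw [hf]
    simp only [Finset.card_empty, Nat.cast_zero, sub_zero]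
    exact min_eq_right (by positivity)
  rw [Finset.union_empty, hrkX, hrk0, sub_zero]
end

section
/- Let M be an (n,k,r)-MR matroid with r ≤ k. Then M contains a minor isomorphic to the uniform matroid U_{n'}^r, where n' = n − k + r − ⌈k/r⌉ + 1. -/
open Finset

lemma MR_count_mul_le {α : Type*} [DecidableEq α] (M : MRMatroid α) (X : Finset α) :
    ((Finset.univ.filter fun i => M.R i ⊆ X).card) * (M.r + 1) ≤ X.card := by
  classical
  set F := (Finset.univ.filter fun i => M.R i ⊆ X) with hF
  have h1 : F.biUnion M.R ⊆ X := by
    intro x hx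
    simp only [hF, mem_biUnion, mem_filter] at hx
    obtain ⟨i, ⟨_, hi⟩, hxi⟩ := hx
    exact hi hxi
  have h2 : (F.biUnion M.R).card = ∑ i ∈ F, (M.R i).card :=
    card_biUnion (fun i _ j _ hij => M.hdisj i j hij)
  have h3 := card_le_card h1
  rw [h2] at h3
  simpa [M.hcardR, mul_comm] using h3

lemma MR_main {α : Type*} [DecidableEq α] (M : MRMatroid α) (hrk : M.r ≤ M.k)
    (A B : Finset α) (hAB : A ⊆ B)
    (hA : (A.card : ℤ) - ((Finset.univ.filter fun i => M.R i ⊆ A).card : ℤ)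
        = (M.k : ℤ) - M.r)
    (hcond : ∀ i, M.R i ⊆ A ∨ ¬ (M.R i ⊆ B) ∨ Disjoint (M.R i) A) :
    ∀ X ⊆ B \ A, M.rk (X ∪ A) - M.rk A = min (M.r : ℤ) (X.card : ℤ) := by
  classical
  intro X hX
  have hXA : Disjoint X A := by
    rw [Finset.disjoint_left]
    intro x hx
    exact (Finset.mem_sdiff.mp (hX hx)).2
  have hcardU : (X ∪ A).card = X.card + A.card := card_union_of_disjoint hXA
  -- the set of repair sets inside X ∪ A
  set F := (Finset.univ.filter fun i : Fin M.g => M.R i ⊆ X ∪ A) with hFdef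
  set F1 := (Finset.univ.filter fun i : Fin M.g => M.R i ⊆ A) with hF1def
  set F2 := (Finset.univ.filter fun i : Fin M.g => M.R i ⊆ X ∧ ¬ M.R i ⊆ A) with hF2def
  have hXB : X ⊆ B := hX.trans (sdiff_subset)
  have hFsplit : F = F1 ∪ F2 := by
    ext i
    simp only [hFdef, hF1def, hF2def, mem_union, mem_filter, mem_univ, true_and]
    constructor
    · intro h
      by_cases hiA : M.R i ⊆ A
      · exact Or.inl hiA
      · refine Or.inr ⟨?_, hiA⟩
        rcases hcond i with h' | h' | h'
        · exact absurd h' hiA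
        · exact absurd (h.trans (union_subset hXB hAB)) h'
        · intro x hx
          rcases mem_union.mp (h hx) with hx' | hx'
          · exact hx'
          · exact absurd hx' (Finset.disjoint_left.mp h' hx)
    · rintro (h | h)
      · exact h.trans subset_union_right
      · exact h.1.trans subset_union_left
  have hdisj12 : Disjoint F1 F2 := by
    rw [Finset.disjoint_left]
    intro i h1 h2
    simp only [hF1def, mem_filter] at h1
    simp only [hF2def, mem_filter] at h2
    exact h2.2.2 h1.2
  have hFcard : F.card = F1.card + F2.card := by
    rw [hFsplit, card_union_of_disjoint hdisj12]
  have hF2le : F2.card * (M.r + 1) ≤ X.card := by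
    have hsub : F2 ⊆ (Finset.univ.filter fun i : Fin M.g => M.R i ⊆ X) := by
      intro i hi
      simp only [hF2def, mem_filter] at hi
      simp [mem_filter, hi.2.1]
    calc F2.card * (M.r + 1) ≤ (Finset.univ.filter fun i : Fin M.g => M.R i ⊆ X).card * (M.r + 1) :=
          Nat.mul_le_mul_right _ (card_le_card hsub)
      _ ≤ X.card := MR_count_mul_le M X
  have hj : F2.card = 0 ∨ X.card ≥ F2.card + M.r := by
    rcases Nat.eq_zero_or_pos F2.card with h | h
    · exact Or.inl h
    · right
      have : F2.card + M.r ≤ F2.card + F2.card * M.r := by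
        have := Nat.le_mul_of_pos_left M.r h
        omega
      have h2 : F2.card + F2.card * M.r = F2.card * (M.r + 1) := by ring
      omega
  -- now unfold rk
  have hrkA : M.rk A = (M.k : ℤ) - M.r := by
    rw [MRMatroid.rk, hA]
    have : (M.k : ℤ) - M.r ≤ (M.k : ℤ) := by omega
    omega
  rw [MRMatroid.rk, hrkA]
  rw [show (Finset.univ.filter fun i => M.R i ⊆ X ∪ A) = F from rfl]
  rw [hcardU, hFcard]
  have hA' : (A.card : ℤ) - (F1.card : ℤ) = (M.k : ℤ) - M.r := hA
  have hrk' : (M.r : ℤ) ≤ (M.k : ℤ) := by exact_mod_cast hrk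
  rcases hj with h | h
  · rw [h]
    push_cast
    omega
  · push_cast
    omega

lemma card_filter_val_lt (g c : ℕ) (hc : c ≤ g) :
    ((Finset.univ : Finset (Fin g)).filter fun i => i.val < c).card = c := by
  have h : ((Finset.univ : Finset (Fin g)).filter fun i => i.val < c)
      = (Finset.range c).attachFin (fun m hm => lt_of_lt_of_le (Finset.mem_range.mp hm) hc) := by
    ext i
    simp [Finset.mem_attachFin]
  rw [h, Finset.card_attachFin, Finset.card_range]

theorem mr_matroid_uniform_minor_rank_r' {α : Type*} [DecidableEq α]
    (M : MRMatroid α) (hrk : M.r ≤ M.k) :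
    ∃ A B : Finset α, A ⊆ B ∧ B ⊆ M.E ∧
    ((B \ A).card : ℤ) = ((M.E.card : ℤ) - (M.k : ℤ) + (M.r : ℤ) - ⌈(M.k : ℚ) / (M.r : ℚ)⌉ + 1) ∧
    ∀ X ⊆ B \ A, M.rk (X ∪ A) - M.rk A = min (M.r : ℤ) (X.card : ℤ) := by
  classical
  have hr0 : 0 < M.r := M.hr
  have hk0 : 0 < M.k := M.hk
  have hE : M.E.card = M.g * (M.r + 1) := by
    rw [M.hcover, Finset.card_biUnion (fun i _ j _ hij => M.hdisj i j hij)]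
    simp [M.hcardR, mul_comm]
  have hRE : ∀ i, M.R i ⊆ M.E := by
    intro i x hx
    rw [M.hcover]
    exact Finset.mem_biUnion.mpr ⟨i, Finset.mem_univ _, hx⟩
  rcases eq_or_lt_of_le hrk with heq | hlt
  · -- case k = r
    refine ⟨∅, M.E, Finset.empty_subset _, le_refl _, ?_, ?_⟩
    · have hceil : ⌈(M.k : ℚ) / (M.r : ℚ)⌉ = 1 := by
        rw [← heq, div_self (by exact_mod_cast hr0.ne')]
        exact Int.ceil_one
      rw [hceil, Finset.sdiff_empty, ← heq]
      ring
    · rw [Finset.sdiff_empty]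
      have h := MR_main M hrk ∅ M.E (Finset.empty_subset _) ?_ ?_
      · intro X hX
        simpa using h X (by simpa using hX)
      · have hfe : (Finset.univ.filter fun i : Fin M.g => M.R i ⊆ (∅ : Finset α)) = ∅ := by
          apply Finset.filter_eq_empty_iff.mpr
          intro i _
          intro hsub
          have h1 := M.hcardR i
          rw [Finset.subset_empty] at hsub
          rw [hsub] at h1
          simp at h1
        rw [hfe]
        simp [← heq]
      · intro i
        exact Or.inr (Or.inr (Finset.disjoint_empty_right _))
  · -- case r < k
    obtain ⟨q, s, hk', hs1, hs2⟩ : ∃ q s, M.k = q * M.r + s ∧ 1 ≤ s ∧ s ≤ M.r := by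
      have h := Nat.div_add_mod (M.k - 1) M.r
      have h2 := Nat.mod_lt (M.k - 1) hr0
      refine ⟨(M.k - 1) / M.r, (M.k - 1) % M.r + 1, ?_, by omega, by omega⟩
      rw [mul_comm ((M.k - 1) / M.r) M.r]
      omega
    have hq1 : 1 ≤ q := by
      rcases Nat.eq_zero_or_pos q with h | h
      · rw [h] at hk'
        simp at hk'
        omega
      · exact h
    have hqg : q < M.g := by
      have h1 : q * M.r < M.g * M.r := by
        have := M.hkgr
        linarith [hs1]
      exact Nat.lt_of_mul_lt_mul_right h1
    -- the distinguished index
    set i₀ : Fin M.g := ⟨q - 1, by omega⟩ with hi₀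
    set T : Finset (Fin M.g) := Finset.univ.filter (fun i => i.val < q - 1) with hT
    set D : Finset (Fin M.g) := Finset.univ.filter (fun i => ¬ i.val < q) with hD
    have hi₀T : i₀ ∉ T := by simp [hT, hi₀]
    have hi₀D : i₀ ∉ D := by
      simp only [hD, Finset.mem_filter, Finset.mem_univ, true_and, not_not, hi₀]
      omega
    have hTD : ∀ i ∈ T, i ∉ D := by
      intro i hi
      simp only [hT, Finset.mem_filter, Finset.mem_univ, true_and] at hi
      simp only [hD, Finset.mem_filter, Finset.mem_univ, true_and, not_not]
      omega
    have hTcard : T.card = q - 1 := card_filter_val_lt M.g (q - 1) (by omega)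
    have hDcard : D.card = M.g - q := by
      have h1 := Finset.card_filter_add_card_filter_not
        (s := (Finset.univ : Finset (Fin M.g))) (p := fun i => i.val < q)
      have h2 : ((Finset.univ : Finset (Fin M.g)).filter fun i => i.val < q).card = q :=
        card_filter_val_lt M.g q (by omega)
      simp only [Finset.card_univ, Fintype.card_fin] at h1
      rw [hD]
      omega
    -- choose P and Q
    obtain ⟨P, hPsub, hPcard⟩ : ∃ P ⊆ M.R i₀, P.card = s :=
      Finset.exists_subset_card_eq (by rw [M.hcardR]; omega)
    obtain ⟨Q, hQsub, hQcard⟩ : ∃ Q ⊆ M.R i₀ \ P, Q.card = M.r - s := by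
      apply Finset.exists_subset_card_eq
      rw [Finset.card_sdiff_of_subset hPsub, M.hcardR, hPcard]
      omega
    set A : Finset α := T.biUnion M.R ∪ P with hA
    set W : Finset α := Q ∪ D.biUnion M.R with hW
    set B : Finset α := A ∪ W with hB
    -- disjointness facts
    have hTbi : ∀ i ∉ T, Disjoint (T.biUnion M.R) (M.R i) := by
      intro i hi
      rw [Finset.disjoint_biUnion_left]
      intro j hj
      exact M.hdisj j i (fun h => hi (h ▸ hj))
    have hdisjA : ∀ i, i ∉ T → i ≠ i₀ → Disjoint (M.R i) A := by
      intro i hiT hii₀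
      rw [hA, Finset.disjoint_union_right]
      exact ⟨(hTbi i hiT).symm, Finset.disjoint_of_subset_right hPsub (M.hdisj i i₀ hii₀)⟩
    have hQA : Disjoint W A := by
      rw [hW, hA, Finset.disjoint_union_left, Finset.disjoint_union_right,
        Finset.disjoint_union_right]
      refine ⟨⟨?_, ?_⟩, ?_, ?_⟩
      · exact Finset.disjoint_of_subset_left (hQsub.trans Finset.sdiff_subset)
          (hTbi i₀ hi₀T).symm
      · exact Finset.disjoint_of_subset_left hQsub Finset.sdiff_disjoint
      · rw [Finset.disjoint_biUnion_left]
        intro j hj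
        exact ((hTbi j (fun h => hTD j h hj)).symm)
      · rw [Finset.disjoint_biUnion_left]
        intro j hj
        refine Finset.disjoint_of_subset_right hPsub (M.hdisj j i₀ ?_)
        intro h
        exact hi₀D (h ▸ hj)
    have hBA : B \ A = W := by
      rw [hB, Finset.union_sdiff_cancel_left hQA.symm]
    have hAB : A ⊆ B := Finset.subset_union_left
    have hBE : B ⊆ M.E := by
      rw [hB, hA, hW]
      refine Finset.union_subset (Finset.union_subset ?_ (hPsub.trans (hRE i₀)))
        (Finset.union_subset ((hQsub.trans Finset.sdiff_subset).trans (hRE i₀)) ?_) <;>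
      · intro x hx
        rw [Finset.mem_biUnion] at hx
        obtain ⟨j, _, hxj⟩ := hx
        exact hRE j hxj
    -- cardinalities
    have hbiTcard : (T.biUnion M.R).card = (q - 1) * (M.r + 1) := by
      rw [Finset.card_biUnion (fun i _ j _ hij => M.hdisj i j hij)]
      simp [M.hcardR, hTcard, mul_comm]
    have hbiDcard : (D.biUnion M.R).card = (M.g - q) * (M.r + 1) := by
      rw [Finset.card_biUnion (fun i _ j _ hij => M.hdisj i j hij)]
      simp [M.hcardR, hDcard, mul_comm]
    have hPdisj : Disjoint (T.biUnion M.R) P :=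
      Finset.disjoint_of_subset_right hPsub (hTbi i₀ hi₀T)
    have hAcard : A.card = (q - 1) * (M.r + 1) + s := by
      rw [hA, Finset.card_union_of_disjoint hPdisj, hbiTcard, hPcard]
    have hQDdisj : Disjoint Q (D.biUnion M.R) := by
      rw [Finset.disjoint_biUnion_right]
      intro j hj
      refine Finset.disjoint_of_subset_left (hQsub.trans Finset.sdiff_subset)
        (M.hdisj i₀ j ?_)
      intro h
      exact hi₀D (h ▸ hj)
    have hWcard : W.card = (M.r - s) + (M.g - q) * (M.r + 1) := by
      rw [hW, Finset.card_union_of_disjoint hQDdisj, hQcard, hbiDcard]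
    -- the filter over A is exactly T
    have hfilterA : (Finset.univ.filter fun i : Fin M.g => M.R i ⊆ A) = T := by
      ext i
      simp only [Finset.mem_filter, Finset.mem_univ, true_and]
      constructor
      · intro h
        by_contra hiT
        have hsub : M.R i ⊆ P := by
          intro x hx
          rcases Finset.mem_union.mp (h hx) with hx' | hx'
          · exact absurd hx' (Finset.disjoint_right.mp (hTbi i hiT) hx)
          · exact hx'
        have hle := Finset.card_le_card hsub
        rw [M.hcardR, hPcard] at hle
        omega
      · intro hiT
        rw [hA]
        exact (Finset.subset_biUnion_of_mem M.R hiT).trans Finset.subset_union_left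
    -- rank condition on A
    have hq1' : (1 : ℤ) ≤ (q : ℤ) := by exact_mod_cast hq1
    have hAeq : ((A.card : ℤ) - ((Finset.univ.filter fun i : Fin M.g => M.R i ⊆ A).card : ℤ))
        = (M.k : ℤ) - M.r := by
      rw [hfilterA, hAcard, hTcard]
      have hkcast : (M.k : ℤ) = (q : ℤ) * M.r + s := by exact_mod_cast hk'
      have hqcast : ((q - 1 : ℕ) : ℤ) = (q : ℤ) - 1 := by omega
      push_cast [hqcast]
      rw [hkcast]
      ring
    -- the minor condition
    have hcond : ∀ i, M.R i ⊆ A ∨ ¬ (M.R i ⊆ B) ∨ Disjoint (M.R i) A := by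
      intro i
      by_cases hiT : i ∈ T
      · exact Or.inl (by rw [← hfilterA] at hiT; exact (Finset.mem_filter.mp hiT).2)
      by_cases hii₀ : i = i₀
      · refine Or.inr (Or.inl ?_)
        intro hsub
        have hPQ : M.R i ⊆ P ∪ Q := by
          intro x hx
          have hxB := hsub hx
          rw [hB, hA, hW] at hxB
          simp only [Finset.mem_union] at hxB
          rcases hxB with ((h1 | h1) | (h1 | h1))
          · exact absurd h1 (Finset.disjoint_right.mp (hTbi i hiT) hx)
          · exact Finset.mem_union_left _ h1
          · exact Finset.mem_union_right _ h1
          · rw [Finset.mem_biUnion] at h1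
            obtain ⟨j, hj, hxj⟩ := h1
            have hne : i ≠ j := by
              rintro rfl
              rw [hii₀] at hj
              exact hi₀D hj
            exact absurd hxj (Finset.disjoint_left.mp (M.hdisj i j hne) hx)
        have h1 := Finset.card_le_card hPQ
        have h2 := Finset.card_union_le P Q
        rw [M.hcardR] at h1
        rw [hPcard, hQcard] at h2
        omega
      · exact Or.inr (Or.inr (hdisjA i hiT hii₀))
    -- ceiling value
    have hceil : ⌈(M.k : ℚ) / (M.r : ℚ)⌉ = (q : ℤ) + 1 := by
      have hrQ : (0 : ℚ) < (M.r : ℚ) := by exact_mod_cast hr0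
      rw [Int.ceil_eq_iff]
      constructor
      · rw [lt_div_iff₀ hrQ]
        have h1 : q * M.r < M.k := by linarith [hs1]
        have h2 : (q : ℚ) * M.r < (M.k : ℚ) := by exact_mod_cast h1
        push_cast
        linarith
      · rw [div_le_iff₀ hrQ]
        have hexp : (q + 1) * M.r = q * M.r + M.r := by ring
        have h1 : M.k ≤ (q + 1) * M.r := by
          rw [hexp]
          linarith [hs2]
        have h2 : (M.k : ℚ) ≤ ((q + 1 : ℕ) : ℚ) * (M.r : ℚ) := by exact_mod_cast h1
        push_cast at h2 ⊢
        linarith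
    refine ⟨A, B, hAB, hBE, ?_, fun X hX => MR_main M hrk A B hAB hAeq hcond X hX⟩
    rw [hBA, hWcard, hE, hceil]
    have hkcast : (M.k : ℤ) = (q : ℤ) * M.r + s := by exact_mod_cast hk'
    have c1 : ((M.r - s : ℕ) : ℤ) = (M.r : ℤ) - s := by omega
    have c2 : ((M.g - q : ℕ) : ℤ) = (M.g : ℤ) - q := by omega
    push_cast [c1, c2]
    rw [hkcast]
    ring

/-- An `(n,k,r)`-MR matroid with `r ≤ k` contains a minor isomorphic to the
uniform matroid `U_{n'}^r` with `n' = n − k + r − ⌈k/r⌉ + 1`. -/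
theorem mr_matroid_uniform_minor_rank_r {α : Type*} [DecidableEq α]
    (M : MRMatroid α) (hrk : M.r ≤ M.k) :
    M.HasUniformMinor
      ((M.E.card : ℤ) - (M.k : ℤ) + (M.r : ℤ) - ⌈(M.k : ℚ) / (M.r : ℚ)⌉ + 1)
      (M.r : ℤ) := by
  obtain ⟨A, B, h1, h2, h3, h4⟩ := mr_matroid_uniform_minor_rank_r' M hrk
  exact ⟨A, B, h1, h2, h3, h4⟩
end

section
/- Let M be an (n,k,r)-MR matroid and let k' satisfy r < k' < k. Then M contains a minor isomorphic to the uniform matroid U_{n'}^{k'} with n' = n − g − k + k', where g = n/(r+1). -/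
/-! Deleting one element from each repair set leaves a set `D` of `g * r` elements containing no
repair set, so the rank function restricted to `D` is `min k |·|`: the restriction is the uniform
matroid `U_{gr}^k`. Contracting any `k - k'` elements of `D` then leaves `U_{gr-k+k'}^{k'}`, and
`gr - k + k' = n - g - k + k'`. -/

namespace MRMatroid

open Finset

variable {α : Type*} [DecidableEq α] (M : MRMatroid α)

theorem card_E : #M.E = M.g * (M.r + 1) := by
  rw [M.hcover, card_biUnion fun i _ j _ h => M.hdisj i j h]
  simp [M.hcardR]

theorem exists_transversal : ∃ e : Fin M.g → α, ∀ i, e i ∈ M.R i := by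
  have hne (i : Fin M.g) : (M.R i).Nonempty := by rw [← card_pos, M.hcardR]; omega
  exact ⟨fun i => (hne i).choose, fun i => (hne i).choose_spec⟩

def deleteTransversal (e : Fin M.g → α) : Finset α :=
  univ.biUnion fun i => M.R i \ {e i}

variable {M} {e : Fin M.g → α}

theorem deleteTransversal_subset_E : M.deleteTransversal e ⊆ M.E := by
  rw [M.hcover]
  exact biUnion_mono fun i _ => sdiff_subset

theorem card_deleteTransversal (he : ∀ i, e i ∈ M.R i) :
    #(M.deleteTransversal e) = M.g * M.r := by
  rw [deleteTransversal, card_biUnion fun i _ j _ h =>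
    (M.hdisj i j h).mono sdiff_subset sdiff_subset]
  simp [card_sdiff_of_subset (singleton_subset_iff.2 (he _)), M.hcardR, mul_comm]

theorem not_R_subset_deleteTransversal (he : ∀ i, e i ∈ M.R i) (i : Fin M.g) :
    ¬ M.R i ⊆ M.deleteTransversal e := by
  intro hsub
  obtain ⟨j, -, hj⟩ := mem_biUnion.1 (hsub (he i))
  obtain ⟨hjR, hje⟩ := mem_sdiff.1 hj
  rcases eq_or_ne j i with rfl | hji
  · exact hje (mem_singleton_self _)
  · exact disjoint_left.1 (M.hdisj j i hji) hjR (he i)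

theorem rk_of_subset_deleteTransversal (he : ∀ i, e i ∈ M.R i) {S : Finset α}
    (hS : S ⊆ M.deleteTransversal e) : M.rk S = min (M.k : ℤ) #S := by
  have : (univ.filter fun i => M.R i ⊆ S) = ∅ :=
    filter_eq_empty_iff.2 fun i _ hi => not_R_subset_deleteTransversal he i (hi.trans hS)
  simp [rk, this]

theorem hasUniformMinor_of_rk_eq_min_card {D : Finset α} (hDE : D ⊆ M.E)
    (hD : ∀ S ⊆ D, M.rk S = min (M.k : ℤ) #S) (hkD : M.k ≤ #D) {k' : ℕ} (hk' : k' ≤ M.k) :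
    M.HasUniformMinor (#D - M.k + k') k' := by
  obtain ⟨A, hAD, hA⟩ := exists_subset_card_eq (show M.k - k' ≤ #D by omega)
  refine ⟨A, D, hAD, hDE, ?_, fun X hX => ?_⟩
  · rw [card_sdiff_of_subset hAD, hA]
    omega
  · have hXD : X ⊆ D := hX.trans sdiff_subset
    have hXA : Disjoint X A := disjoint_left.2 fun _ ha => (mem_sdiff.1 (hX ha)).2
    rw [hD _ (union_subset hXD hAD), hD _ hAD, card_union_of_disjoint hXA, hA]
    omega

end MRMatroid

open MRMatroid in
theorem mr_matroid_uniform_minor_large_rank_general {α : Type*} [DecidableEq α]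
    (M : MRMatroid α) (k' : ℕ) (hk'k : k' < M.k) :
    M.HasUniformMinor
      ((M.E.card : ℤ) - (M.g : ℤ) - (M.k : ℤ) + (k' : ℤ)) (k' : ℤ) := by
  obtain ⟨e, he⟩ := M.exists_transversal
  have hD := card_deleteTransversal he
  have := hasUniformMinor_of_rk_eq_min_card deleteTransversal_subset_E
    (fun _ => rk_of_subset_deleteTransversal he) (hD ▸ M.hkgr) hk'k.le
  rwa [hD, show (M.g * M.r : ℕ) = (M.E.card - M.g : ℤ) by rw [card_E]; push_cast; ring] at this

/-- An `(n,k,r)`-MR matroid, for any `r < k' < k`, contains a minor isomorphic to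
the uniform matroid `U_{n'}^{k'}` with `n' = n − g − k + k'`. -/
theorem mr_matroid_uniform_minor_large_rank {α : Type*} [DecidableEq α]
    (M : MRMatroid α) (k' : ℕ) (hrk' : M.r < k') (hk'k : k' < M.k) :
    M.HasUniformMinor
      ((M.E.card : ℤ) - (M.g : ℤ) - (M.k : ℤ) + (k' : ℤ)) (k' : ℤ) :=
  mr_matroid_uniform_minor_large_rank_general M k' hk'k
end

section
/- Any linear [n,k]-MDS code over the finite field F_q with 2 ≤ k ≤ n − 1 satisfies n ≤ q + k − 1. -/
open Finset

lemma norm_le_of_zeros' {n : ℕ} {F : Type*} [Field F] [DecidableEq F]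
    (v : Fin n → F) (A : Finset (Fin n)) (hA : ∀ i ∈ A, v i = 0) :
    hammingNorm v ≤ n - A.card := by
  have hsub : ({i | v i ≠ 0} : Finset (Fin n)) ⊆ Aᶜ := by
    intro i hi
    simp only [mem_filter] at hi
    simp only [mem_compl]
    intro hiA
    exact hi.2 (hA i hiA)
  have := Finset.card_le_card hsub
  simpa [Finset.card_compl, hammingNorm] using this

lemma card_filter_lt_fin' {n m : ℕ} (h : m ≤ n) :
    (Finset.filter (fun i : Fin n => (i : ℕ) < m) Finset.univ).card = m := by
  have : (Finset.filter (fun i : Fin n => (i : ℕ) < m) Finset.univ)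
      = Finset.map (Fin.castLEEmb h) Finset.univ := by
    ext i
    simp only [mem_filter, mem_univ, true_and, Finset.mem_map, Fin.castLEEmb_apply]
    constructor
    · intro hi; exact ⟨⟨i, hi⟩, by simp⟩
    · rintro ⟨j, -, rfl⟩; exact j.isLt
  rw [this]; simp

/-- Any linear `[n,k]`-MDS code over `F_q` with `2 ≤ k ≤ n − 1`
satisfies `n ≤ q + k − 1`. -/
theorem mds_code_field_size_bound (n k q : ℕ) (F : Type*) [Field F] [Fintype F]
    [DecidableEq F] (hq : Fintype.card F = q)
    (C : Submodule F (Fin n → F)) (hdim : Module.finrank F C = k)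
    (hk2 : 2 ≤ k) (hkn : k ≤ n - 1)
    (hmds : ∀ v ∈ C, v ≠ 0 → n - k + 1 ≤ hammingNorm v) :
    n ≤ q + k - 1 := by
  have hq2 : 2 ≤ q := hq ▸ Fintype.one_lt_card
  have hkn' : k + 1 ≤ n := by omega
  -- existence of special codewords
  have key : ∀ j : Fin n, k ≤ (j : ℕ) → ∃ w : Fin n → F, w ∈ C ∧
      (∀ i : Fin n, ((i : ℕ) < k - 2 ∨ i = j) → w i = 0) ∧
      (∀ i : Fin n, ¬ ((i : ℕ) < k - 2 ∨ i = j) → w i ≠ 0) := by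
    intro j hj
    set A : Finset (Fin n) :=
      Finset.filter (fun i : Fin n => (i : ℕ) < k - 2 ∨ i = j) Finset.univ with hAdef
    have hAcard : A.card = k - 1 := by
      have : A = Finset.filter (fun i : Fin n => (i : ℕ) < k - 2) Finset.univ ∪ {j} := by
        ext i; simp [hAdef, or_comm]
      rw [this, Finset.card_union_of_disjoint, card_filter_lt_fin' (by omega)]
      · simp; omega
      · simp only [Finset.disjoint_singleton_right, mem_filter]
        rintro ⟨-, h⟩; omega
    let L : C →ₗ[F] (A → F) :=
      { toFun := fun c i => (c : Fin n → F) i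
        map_add' := by intros; rfl
        map_smul' := by intros; rfl }
    have hker : LinearMap.ker L ≠ ⊥ := by
      apply LinearMap.ker_ne_bot_of_finrank_lt
      rw [hdim]
      have : Module.finrank F (A → F) = A.card := by
        simp [Module.finrank_pi]
      rw [this, hAcard]; omega
    obtain ⟨⟨w, hwC⟩, hwk, hwne⟩ := Submodule.exists_mem_ne_zero_of_ne_bot hker
    have hwne' : w ≠ 0 := by
      intro h; apply hwne
      apply Subtype.ext; exact h
    have hzero : ∀ i : Fin n, ((i : ℕ) < k - 2 ∨ i = j) → w i = 0 := by
      intro i hi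
      have h0 : L ⟨w, hwC⟩ = 0 := hwk
      exact congrFun h0 ⟨i, by simp [hAdef, hi]⟩
    refine ⟨w, hwC, hzero, ?_⟩
    intro i hi hwi
    have hzero' : ∀ i' ∈ A ∪ {i}, w i' = 0 := by
      intro i' hi'
      rcases Finset.mem_union.mp hi' with h | h
      · exact hzero i' (by simpa [hAdef] using h)
      · rw [Finset.mem_singleton.mp h]; exact hwi
    have hcard : (A ∪ {i}).card = k := by
      rw [Finset.card_union_of_disjoint, hAcard]
      · simp; omega
      · simp only [Finset.disjoint_singleton_right]
        simpa [hAdef] using hi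
    have h1 := norm_le_of_zeros' w _ hzero'
    rw [hcard] at h1
    have h2 := hmds w hwC hwne'
    omega
  choose w hwC hwz hwnz using key
  have hj0 : k - 2 < n := by omega
  have hj1 : k - 1 < n := by omega
  set j₀ : Fin n := ⟨k - 2, hj0⟩ with hj₀def
  set j₁ : Fin n := ⟨k - 1, hj1⟩ with hj₁def
  have hinjm : ∀ m : Fin (n - k), k + (m : ℕ) < n := by
    intro m; omega
  let jj : Fin (n - k) → Fin n := fun m => ⟨k + m, hinjm m⟩
  have hjk : ∀ m, k ≤ ((jj m : Fin n) : ℕ) := fun m => Nat.le_add_right _ _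
  set f : Fin (n - k) → F := fun m =>
    (w (jj m) (hjk m) j₀)⁻¹ * w (jj m) (hjk m) j₁ with hfdef
  have hnz : ∀ (m : Fin (n - k)) (i : Fin n), k - 2 ≤ (i : ℕ) → (i : ℕ) ≠ k + m →
      w (jj m) (hjk m) i ≠ 0 := by
    intro m i hi1 hi2
    apply hwnz
    simp only [not_or]
    refine ⟨by omega, ?_⟩
    intro h
    exact hi2 (congrArg Fin.val h)
  have hw0 : ∀ m, w (jj m) (hjk m) j₀ ≠ 0 := fun m =>
    hnz m j₀ (le_refl _) (by simp [hj₀def]; omega)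
  have hw1 : ∀ m, w (jj m) (hjk m) j₁ ≠ 0 := fun m =>
    hnz m j₁ (by simp [hj₁def]; omega) (by simp [hj₁def]; omega)
  have hfne : ∀ m, f m ≠ 0 := fun m => mul_ne_zero (inv_ne_zero (hw0 m)) (hw1 m)
  have hfinj : Function.Injective f := by
    intro a b hab
    by_contra hne
    set wa := w (jj a) (hjk a) with hwa
    set wb := w (jj b) (hjk b) with hwb
    set u : Fin n → F := (wa j₀)⁻¹ • wa - (wb j₀)⁻¹ • wb with hu
    have huC : u ∈ C :=
      Submodule.sub_mem C (Submodule.smul_mem C _ (hwC _ _)) (Submodule.smul_mem C _ (hwC _ _))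
    -- u vanishes on B = filter(< k-2) ∪ {j₀, j₁}
    set B : Finset (Fin n) :=
      Finset.filter (fun i : Fin n => (i : ℕ) < k - 2) Finset.univ ∪ {j₀, j₁} with hB
    have hBcard : B.card = k := by
      rw [hB, Finset.card_union_of_disjoint, card_filter_lt_fin' (by omega)]
      · have : ({j₀, j₁} : Finset (Fin n)).card = 2 := by
          rw [Finset.card_insert_of_notMem, Finset.card_singleton]
          simp only [Finset.mem_singleton]
          intro h
          have := congrArg Fin.val h
          simp [hj₀def, hj₁def] at this
          omega
        rw [this]; omega
      · simp only [Finset.disjoint_insert_right, Finset.disjoint_singleton_right, mem_filter]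
        constructor
        · rintro ⟨-, h⟩; change k - 2 < k - 2 at h; omega
        · rintro ⟨-, h⟩; change k - 1 < k - 2 at h; omega
    have huz : ∀ i ∈ B, u i = 0 := by
      intro i hi
      simp only [hB, Finset.mem_union, mem_filter, mem_univ, true_and,
        Finset.mem_insert, Finset.mem_singleton] at hi
      rcases hi with h | h | h
      · have z1 : wa i = 0 := hwz _ _ i (Or.inl h)
        have z2 : wb i = 0 := hwz _ _ i (Or.inl h)
        simp [hu, z1, z2]
      · subst h
        simp only [hu, Pi.sub_apply, Pi.smul_apply, smul_eq_mul]
        rw [inv_mul_cancel₀ (hw0 a), inv_mul_cancel₀ (hw0 b), sub_self]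
      · subst h
        simp only [hu, Pi.sub_apply, Pi.smul_apply, smul_eq_mul]
        have : (wa j₀)⁻¹ * wa j₁ = (wb j₀)⁻¹ * wb j₁ := hab
        rw [this, sub_self]
    have hu0 : u = 0 := by
      by_contra hune
      have h1 := norm_le_of_zeros' u B huz
      rw [hBcard] at h1
      have h2 := hmds u huC hune
      omega
    -- from u = 0, wa proportional to wb
    have hab' : a ≠ b := fun h => hne (by rw [h])
    have habv : (k : ℕ) + a ≠ k + b := by
      intro h
      exact hab' (Fin.ext (by omega))
    have hwab : (wa j₀)⁻¹ • wa = (wb j₀)⁻¹ • wb := by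
      have := sub_eq_zero.mp hu0
      exact this
    have hzza : wa (jj a) = 0 := hwz _ _ _ (Or.inr rfl)
    have hzzb : wb (jj a) ≠ 0 := hnz b (jj a) (by simp [jj]; omega) (by simp [jj]; omega)
    have := congrFun hwab (jj a)
    simp only [Pi.smul_apply, smul_eq_mul, hzza, mul_zero] at this
    exact hzzb (by
      have h3 := this.symm
      rcases mul_eq_zero.mp h3 with h | h
      · exact absurd h (inv_ne_zero (hw0 b))
      · exact h)
  -- counting
  have hcount : n - k ≤ q - 1 := by
    have : Fintype.card (Fin (n - k)) ≤ Fintype.card {x : F // x ≠ 0} := by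
      apply Fintype.card_le_of_injective (fun m => ⟨f m, hfne m⟩)
      intro a b hab
      exact hfinj (congrArg Subtype.val hab)
    have hc0 : Fintype.card {x : F // x ≠ 0} = q - 1 := by
      simp [Fintype.card_subtype_compl (fun x : F => x = 0),
        Fintype.card_subtype_eq, hq]
    rw [Fintype.card_fin, hc0] at this
    exact this
  omega
end
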